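/- Let X be a set, g : X → Bool a labeling function, (F, d) a metric space, and f : X → F a function such that for all x1, x2 in X, d(f(x1), f(x2)) = 0 if and only if g(x1) = g(x2). Let μ_i and μ_k be probability measures on a measurable space X with equal class priors, i.e., μ_i({x : g(x) = ℓ}) = μ_k({x : g(x) = ℓ}) for each label ℓ ∈ Bool. Then for every hypothesis h' : F → Bool (with the sets {x : h'(f(x)) = true} measurable for μ_i and μ_k), one has μ_i({x : h'(f(x)) = true}) = μ_k({x : h'(f(x)) = true}); consequently the H'-divergence sup over h' of |μ_i({x : h'(f(x)) = true}) − μ_k({x : h'(f(x)) = true})| equals 0. (Proposition 1: the label-preserving transformation f reduces the H-divergence between any pair of source domains on which it is learned to zero.) -/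

import Mathlib

/-!
A label-preserving `f` identifies exactly the points with equal labels, so every event
`{x | h' (f x) = true}` is a union of label classes: `∅`, `{g = true}`, `{g = false}` or
everything. Equal class priors and total mass one make both domains agree on each of these.
-/

open MeasureTheory Set

theorem Set.preimage_eq_preimage_image_of_factors {X F β : Type*} {f : X → F} {g : X → β}
    (hfg : ∀ x y, g x = g y → f x = f y) (s : Set F) :
    f ⁻¹' s = g ⁻¹' (g '' (f ⁻¹' s)) := by
  ext x
  constructor
  · exact fun hx => ⟨x, hx, rfl⟩
  · rintro ⟨y, hy, hgy⟩
    rwa [mem_preimage, ← hfg y x hgy]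

theorem MeasureTheory.Measure.preimage_bool_eq_of_fibers_eq {X : Type*} [MeasurableSpace X]
    {μ ν : Measure X} (g : X → Bool) (huniv : μ univ = ν univ)
    (hfib : ∀ ℓ : Bool, μ {x | g x = ℓ} = ν {x | g x = ℓ}) (T : Set Bool) :
    μ (g ⁻¹' T) = ν (g ⁻¹' T) := by
  by_cases htrue : true ∈ T <;> by_cases hfalse : false ∈ T
  · have hT : g ⁻¹' T = univ := by
      ext x; cases hx : g x <;> simp [hx, htrue, hfalse]
    rw [hT, huniv]
  · have hT : g ⁻¹' T = {x | g x = true} := by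
      ext x; cases hx : g x <;> simp [hx, htrue, hfalse]
    rw [hT, hfib]
  · have hT : g ⁻¹' T = {x | g x = false} := by
      ext x; cases hx : g x <;> simp [hx, htrue, hfalse]
    rw [hT, hfib]
  · have hT : g ⁻¹' T = ∅ := by
      ext x; cases hx : g x <;> simp [hx, htrue, hfalse]
    rw [hT, measure_empty, measure_empty]

/-- Proposition 1: a label-preserving transformation `f` makes the measure of any
hypothesis-induced set agree across source domains with equal class priors; hence the
H'-divergence (sup over hypotheses of the absolute difference of probabilities) is zero. -/
theorem label_preserving_transformation_zero_H_divergence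
    {X : Type*} [MeasurableSpace X] {F : Type*} [MetricSpace F]
    (g : X → Bool) (f : X → F)
    (hf : ∀ x1 x2 : X, dist (f x1) (f x2) = 0 ↔ g x1 = g x2)
    (μi μk : Measure X) [IsProbabilityMeasure μi] [IsProbabilityMeasure μk]
    (hprior : ∀ ℓ : Bool, μi {x | g x = ℓ} = μk {x | g x = ℓ}) :
    (∀ h' : F → Bool, MeasurableSet {x | h' (f x) = true} →
        μi {x | h' (f x) = true} = μk {x | h' (f x) = true}) ∧
    (⨆ h' : {h' : F → Bool // MeasurableSet {x : X | h' (f x) = true}},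
        |(μi {x | h'.1 (f x) = true}).toReal - (μk {x | h'.1 (f x) = true}).toReal|) = 0 := by
  have hfg : ∀ x y, g x = g y → f x = f y := fun x y hxy => dist_eq_zero.mp ((hf x y).2 hxy)
  have hevents : ∀ h' : F → Bool, μi {x | h' (f x) = true} = μk {x | h' (f x) = true} := by
    intro h'
    change μi (f ⁻¹' {y | h' y = true}) = μk (f ⁻¹' {y | h' y = true})
    rw [preimage_eq_preimage_image_of_factors hfg]
    exact Measure.preimage_bool_eq_of_fibers_eq g (by simp) hprior _
  refine ⟨fun h' _ => hevents h', ?_⟩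
  simp only [hevents, sub_self, abs_zero, Real.iSup_const_zero]
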